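/- arXiv:1108.5779 — 4 statements merged into one kernel-verified Lean document; each statement's English description precedes it below -/
import Mathlib

section
/- Let n ≥ 1 and let X be a nilpotent formal vector field on ℂⁿ singular at 0, i.e. a ℂ-derivation of ℂ[[x₁,…,xₙ]] with X(m) ⊆ m whose induced endomorphism of m/m² is nilpotent. Let f, h ∈ ℂ[[x₁,…,xₙ]] with f ≠ 0 and h ≠ 0, and let λ ∈ ℂ satisfy h·X(f) − f·X(h) = λ·f·h (i.e. the rational function f/h is an eigenvector of X with eigenvalue λ). Then λ = 0. -/
/-!
Let `d`, `e` be the `m`-adic orders of `f`, `h`. The derivation `X` preserves every `m ^ j`, and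
since its linear part is nilpotent, a high enough power of `X` maps `m ^ d` into `m ^ (d + 1)`.
Let `p` and `q` be the last exponents with `X^p f ∉ m ^ (d + 1)` and `X^q h ∉ m ^ (e + 1)`.
Apply `X^(p+q)` to `h X f - f X h = λ f h`: by the Leibniz rule the left side lies in
`m ^ (d + e + 1)`, while the right side is `λ (p+q).choose p • X^p f X^q h` modulo
`m ^ (d + e + 1)`. Orders of power series add, so `X^p f X^q h ∉ m ^ (d + e + 1)`, and `λ = 0`.
-/

noncomputable def mIdeal (n : ℕ) : Ideal (MvPowerSeries (Fin n) ℂ) :=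
  RingHom.ker (MvPowerSeries.constantCoeff : MvPowerSeries (Fin n) ℂ →+* ℂ)

open Finset

namespace MvPowerSeries

variable {σ R : Type*}

local notation "𝔪" => RingHom.ker (constantCoeff : MvPowerSeries σ R →+* R)

section CommSemiring

variable [CommSemiring R]

theorem exists_eq_sum_X_mul [Fintype σ] [LinearOrder σ] {g : MvPowerSeries σ R}
    (hg : constantCoeff g = 0) :
    ∃ q : σ → MvPowerSeries σ R, g = ∑ i, X i * q i ∧
      ∀ i t, coeff t (q i) ≠ 0 → coeff (t + Finsupp.single i 1) g ≠ 0 := by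
  classical
  -- each monomial of `g` is divided by the smallest variable occurring in it
  let q (i : σ) : MvPowerSeries σ R := fun t ↦
    if (t + Finsupp.single i 1).support.min = (i : WithTop σ) then
      coeff (t + Finsupp.single i 1) g
    else 0
  have hq (i : σ) (s : σ →₀ ℕ) :
      coeff s (X i * q i) = if s.support.min = i then coeff s g else 0 := by
    rw [X, coeff_monomial_mul, one_mul]
    split_ifs with hle hmin hmin
    · change ite _ _ _ = _
      rw [tsub_add_cancel_of_le hle, if_pos hmin]
    · change ite _ _ _ = _
      rw [tsub_add_cancel_of_le hle, if_neg hmin]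
    · exact absurd (Finsupp.single_le_iff.2 (Nat.one_le_iff_ne_zero.2
        (Finsupp.mem_support_iff.1 (mem_of_min hmin)))) hle
    · rfl
  refine ⟨q, ext fun s ↦ ?_, fun i t ht ↦ ?_⟩
  · simp only [map_sum, hq]
    by_cases hs : s = 0
    · simp [hs, hg]
    · obtain ⟨i, hi⟩ := min_of_nonempty (Finsupp.support_nonempty_iff.2 hs)
      simp [hi]
  · contrapose! ht
    change ite _ _ _ = 0
    rw [ht, ite_self]

theorem mem_ker_constantCoeff_pow_iff [Finite σ] {g : MvPowerSeries σ R} {d : ℕ} :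
    g ∈ 𝔪 ^ d ↔ (d : ℕ∞) ≤ g.order := by
  induction d generalizing g with
  | zero => simp
  | succ d ih =>
    constructor
    · intro hg
      rw [pow_succ] at hg
      refine Submodule.mul_induction_on hg (fun x hx y hy ↦ ?_) fun x y hx hy ↦ ?_
      · push_cast
        exact (add_le_add (ih.1 hx) (one_le_order_iff_constCoeff_eq_zero.2 hy)).trans le_order_mul
      · exact (le_min hx hy).trans min_order_le_add
    · intro hg
      have := Fintype.ofFinite σ
      obtain ⟨n, ⟨e⟩⟩ := Finite.exists_equiv_fin σ
      let := LinearOrder.lift' e e.injective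
      have h0 : constantCoeff g = 0 :=
        one_le_order_iff_constCoeff_eq_zero.1 (le_trans (by simp) hg)
      obtain ⟨q, rfl, hq⟩ := exists_eq_sum_X_mul h0
      rw [pow_succ']
      refine Ideal.sum_mem _ fun i _ ↦ Ideal.mul_mem_mul (constantCoeff_X i) (ih.2 ?_)
      refine nat_le_order fun t ht ↦ ?_
      by_contra hne
      have hle := hg.trans (order_le (hq i t hne))
      rw [map_add, Finsupp.degree_single] at hle
      have : d + 1 ≤ t.degree + 1 := by exact_mod_cast hle
      omega

theorem mem_ker_constantCoeff_pow_and_notMem_succ_iff [Finite σ] {g : MvPowerSeries σ R}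
    {d : ℕ} : g ∈ 𝔪 ^ d ∧ g ∉ 𝔪 ^ (d + 1) ↔ g.order = d := by
  rw [mem_ker_constantCoeff_pow_iff, mem_ker_constantCoeff_pow_iff, Nat.cast_succ,
    ENat.add_one_le_iff (ENat.natCast_ne_top d), not_lt, ← le_antisymm_iff, eq_comm]

theorem exists_mem_ker_constantCoeff_pow_notMem_succ [Finite σ] {g : MvPowerSeries σ R}
    (hg : g ≠ 0) : ∃ d : ℕ, g ∈ 𝔪 ^ d ∧ g ∉ 𝔪 ^ (d + 1) :=
  ⟨_, mem_ker_constantCoeff_pow_and_notMem_succ_iff.2 (ne_zero_iff_order_finite.1 hg).symm⟩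

theorem mul_notMem_ker_constantCoeff_pow [Finite σ] [NoZeroDivisors R] {x y : MvPowerSeries σ R}
    {d e : ℕ} (hx : x ∈ 𝔪 ^ d) (hx' : x ∉ 𝔪 ^ (d + 1)) (hy : y ∈ 𝔪 ^ e)
    (hy' : y ∉ 𝔪 ^ (e + 1)) : x * y ∉ 𝔪 ^ (d + e + 1) := by
  refine (mem_ker_constantCoeff_pow_and_notMem_succ_iff.2 ?_).2
  rw [order_mul, mem_ker_constantCoeff_pow_and_notMem_succ_iff.1 ⟨hx, hx'⟩,
    mem_ker_constantCoeff_pow_and_notMem_succ_iff.1 ⟨hy, hy'⟩, Nat.cast_add]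

end CommSemiring

theorem derivation_apply_mem_ker_constantCoeff [CommRing R]
    (D : Derivation R (MvPowerSeries σ R) (MvPowerSeries σ R))
    (hD : ∀ g ∈ 𝔪, D g ∈ 𝔪) (g : MvPowerSeries σ R) : D g ∈ 𝔪 := by
  have hg : g - algebraMap R _ (constantCoeff g) ∈ 𝔪 := by
    simp [RingHom.mem_ker, ← c_eq_algebraMap]
  simpa using hD _ hg

end MvPowerSeries

theorem Ideal.mul_mem_pow_of_le_add {A : Type*} [CommSemiring A] {I : Ideal A} {x y : A}
    {p q r : ℕ} (hx : x ∈ I ^ p) (hy : y ∈ I ^ q) (hr : r ≤ p + q) : x * y ∈ I ^ r :=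
  Ideal.pow_le_pow_right hr (pow_add I p q ▸ Ideal.mul_mem_mul hx hy)

namespace Derivation

section CommSemiring

variable {R A : Type*} [CommSemiring R] [CommSemiring A] [Algebra R A] (D : Derivation R A A)

theorem iterate_apply_mul (n : ℕ) (a b : A) :
    D^[n] (a * b) = ∑ ij ∈ antidiagonal n, n.choose ij.1 • (D^[ij.1] a * D^[ij.2] b) := by
  induction n with
  | zero => simp
  | succ n ih =>
    rw [sum_antidiagonal_choose_succ_nsmul (fun i j ↦ D^[i] a * D^[j] b) n]
    simp only [Function.iterate_succ_apply', ih, map_sum, map_nsmul, leibniz, smul_eq_mul,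
      smul_add, sum_add_distrib]
    congr 1
    refine sum_congr rfl fun ⟨i, j⟩ hij ↦ ?_
    rw [n.choose_symm_of_eq_add (mem_antidiagonal.1 hij).symm, mul_comm]

theorem iterate_map_smul (n : ℕ) (c : R) (a : A) : D^[n] (c • a) = c • D^[n] a := by
  simpa only [Module.End.coe_pow, coeFn_coe] using _root_.map_smul ((D : A →ₗ[R] A) ^ n) c a

theorem iterate_apply_mul_mem {J : Ideal A} {n : ℕ} {a b : A}
    (h : ∀ i j, i + j = n → D^[i] a * D^[j] b ∈ J) : D^[n] (a * b) ∈ J := by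
  rw [iterate_apply_mul]
  exact J.sum_mem fun ij hij ↦ nsmul_mem (h ij.1 ij.2 (mem_antidiagonal.1 hij)) _

variable {I : Ideal A}

theorem apply_mem_pow (hD : ∀ a ∈ I, D a ∈ I) {j : ℕ} {a : A} (ha : a ∈ I ^ j) :
    D a ∈ I ^ j := by
  induction j generalizing a with
  | zero => simp
  | succ j ih =>
    rw [pow_succ] at ha ⊢
    refine Submodule.mul_induction_on ha (fun x hx y hy ↦ ?_) fun x y hx hy ↦ ?_
    · rw [leibniz, smul_eq_mul, smul_eq_mul, mul_comm y]
      exact add_mem (Ideal.mul_mem_mul hx (hD y hy)) (Ideal.mul_mem_mul (ih hx) hy)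
    · rw [map_add]
      exact add_mem hx hy

theorem iterate_apply_mem_pow (hD : ∀ a ∈ I, D a ∈ I) (i : ℕ) {j : ℕ} {a : A}
    (ha : a ∈ I ^ j) : D^[i] a ∈ I ^ j :=
  Set.MapsTo.iterate (fun _ ↦ D.apply_mem_pow hD) i ha

section

variable {k : ℕ} (hD : ∀ a, D a ∈ I) (hk : ∀ a ∈ I, D^[k] a ∈ I ^ 2)
include hD hk

theorem iterate_apply_mem_pow_succ {d : ℕ} {a : A} (ha : a ∈ I ^ d) {m : ℕ} (hm : d * k < m) :
    D^[m] a ∈ I ^ (d + 1) := by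
  have hI : ∀ a ∈ I, D a ∈ I := fun a _ ↦ hD a
  induction d generalizing a m with
  | zero =>
    obtain ⟨m, rfl⟩ : ∃ m', m = m' + 1 := ⟨m - 1, by omega⟩
    rw [Function.iterate_succ_apply, zero_add, pow_one]
    exact Set.MapsTo.iterate hI m (hD a)
  | succ d ih =>
    rw [pow_succ] at ha
    refine Submodule.mul_induction_on ha (fun x hx y hy ↦ ?_) fun x y hx hy ↦ ?_
    · -- in each Leibniz term either `y` is hit `k` times, or `x` more than `d * k` times
      refine D.iterate_apply_mul_mem fun i j hij ↦ ?_
      by_cases hj : k ≤ j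
      · obtain ⟨j, rfl⟩ : ∃ j', j = j' + k := ⟨j - k, by omega⟩
        rw [Function.iterate_add_apply]
        exact Ideal.mul_mem_pow_of_le_add (D.iterate_apply_mem_pow hI i hx)
          (D.iterate_apply_mem_pow hI j (hk y hy)) (by omega)
      · exact Ideal.mul_mem_pow_of_le_add (ih hx (m := i) (by nlinarith))
          (D.iterate_apply_mem_pow hI j (pow_one I ▸ hy)) (by omega)
    · rw [iterate_map_add]
      exact add_mem hx hy

theorem exists_max_iterate_apply_notMem_pow_succ {d : ℕ} {a : A} (ha : a ∈ I ^ d)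
    (ha' : a ∉ I ^ (d + 1)) :
    ∃ p, D^[p] a ∉ I ^ (d + 1) ∧ ∀ i, p < i → D^[i] a ∈ I ^ (d + 1) := by
  classical
  let P i := D^[i] a ∉ I ^ (d + 1)
  refine ⟨Nat.findGreatest P (d * k), Nat.findGreatest_spec (P := P) (Nat.zero_le _) ha',
    fun i hi ↦ ?_⟩
  by_cases hik : i ≤ d * k
  · exact not_not.1 (Nat.findGreatest_is_greatest hi hik)
  · exact D.iterate_apply_mem_pow_succ hD hk ha (by omega)

end

end CommSemiring

theorem iterate_add_apply_mul_sub_mem {R A : Type*} [CommSemiring R] [CommRing A] [Algebra R A]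
    (D : Derivation R A A) {J : Ideal A} {p q : ℕ} {a b : A}
    (h : ∀ i j, p < i ∨ q < j → D^[i] a * D^[j] b ∈ J) :
    D^[p + q] (a * b) - (p + q).choose p • (D^[p] a * D^[q] b) ∈ J := by
  have hpq : (p, q) ∈ antidiagonal (p + q) := mem_antidiagonal.2 rfl
  rw [iterate_apply_mul, ← add_sum_erase _ _ hpq, add_sub_cancel_left]
  refine J.sum_mem fun ⟨i, j⟩ hij ↦ nsmul_mem (h i j ?_) _
  obtain ⟨hne, hij⟩ := mem_erase.1 hij
  rw [HasAntidiagonal.mem_antidiagonal] at hij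
  rw [Ne, Prod.mk.injEq] at hne
  omega

theorem eq_zero_of_mul_sub_mul_eq_smul {K A : Type*} [Field K] [CharZero K] [CommRing A]
    [Algebra K A] (D : Derivation K A A) {I : Ideal A} {k : ℕ}
    (hD : ∀ a, D a ∈ I) (hk : ∀ a ∈ I, D^[k] a ∈ I ^ 2)
    (hI : ∀ {x y : A} {d e : ℕ}, x ∈ I ^ d → x ∉ I ^ (d + 1) → y ∈ I ^ e →
      y ∉ I ^ (e + 1) → x * y ∉ I ^ (d + e + 1))
    {f h : A} {d e : ℕ} (hf : f ∈ I ^ d) (hf' : f ∉ I ^ (d + 1)) (hh : h ∈ I ^ e)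
    (hh' : h ∉ I ^ (e + 1)) {c : K} (heig : h * D f - f * D h = c • (f * h)) : c = 0 := by
  by_contra hc
  have hI' : ∀ a ∈ I, D a ∈ I := fun a _ ↦ hD a
  obtain ⟨p, hp, hp'⟩ := D.exists_max_iterate_apply_notMem_pow_succ hD hk hf hf'
  obtain ⟨q, hq, hq'⟩ := D.exists_max_iterate_apply_notMem_pow_succ hD hk hh hh'
  have key : ∀ i j, p < i ∨ q < j → D^[i] f * D^[j] h ∈ I ^ (d + e + 1) := by
    rintro i j (hi | hj)
    · exact Ideal.mul_mem_pow_of_le_add (hp' i hi) (D.iterate_apply_mem_pow hI' j hh) (by omega)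
    · exact Ideal.mul_mem_pow_of_le_add (D.iterate_apply_mem_pow hI' i hf) (hq' j hj) (by omega)
  have hDf : D^[p + q] (h * D f) ∈ I ^ (d + e + 1) := by
    rw [mul_comm]
    refine D.iterate_apply_mul_mem fun i j hij ↦ ?_
    rw [← Function.iterate_succ_apply]
    exact key _ _ (by omega)
  have hDh : D^[p + q] (f * D h) ∈ I ^ (d + e + 1) := by
    refine D.iterate_apply_mul_mem fun i j hij ↦ ?_
    rw [← Function.iterate_succ_apply]
    exact key _ _ (by omega)
  have hfh : D^[p + q] (f * h) ∈ I ^ (d + e + 1) := by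
    have := sub_mem hDf hDh
    rwa [← iterate_map_sub, heig, iterate_map_smul, Submodule.smul_mem_iff _ hc] at this
  have hlead := sub_mem hfh (D.iterate_add_apply_mul_sub_mem key)
  rw [sub_sub_cancel, ← Nat.cast_smul_eq_nsmul K,
    Submodule.smul_mem_iff _ (Nat.cast_ne_zero.2 (Nat.choose_pos (by omega)).ne')] at hlead
  exact hI (D.iterate_apply_mem_pow hI' p hf) hp (D.iterate_apply_mem_pow hI' q hh) hq hlead

end Derivation

theorem eigenvalue_eq_zero_of_nilpotentVF_general (n : ℕ)
    (X : Derivation ℂ (MvPowerSeries (Fin n) ℂ) (MvPowerSeries (Fin n) ℂ))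
    (hsing : ∀ f ∈ mIdeal n, X f ∈ mIdeal n)
    (hnilX : ∃ k : ℕ, ∀ f ∈ mIdeal n,
      ((X.toLinearMap : Module.End ℂ (MvPowerSeries (Fin n) ℂ)) ^ k) f ∈ (mIdeal n) ^ 2)
    (f h : MvPowerSeries (Fin n) ℂ) (hf : f ≠ 0) (hh : h ≠ 0) (lam : ℂ)
    (heig : h * X f - f * X h = lam • (f * h)) :
    lam = 0 := by
  obtain ⟨k, hk⟩ := hnilX
  obtain ⟨d, hfd, hfd'⟩ := MvPowerSeries.exists_mem_ker_constantCoeff_pow_notMem_succ hf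
  obtain ⟨e, hhe, hhe'⟩ := MvPowerSeries.exists_mem_ker_constantCoeff_pow_notMem_succ hh
  refine X.eq_zero_of_mul_sub_mul_eq_smul (I := mIdeal n) (k := k)
    (MvPowerSeries.derivation_apply_mem_ker_constantCoeff X hsing) (fun a ha ↦ ?_)
    MvPowerSeries.mul_notMem_ker_constantCoeff_pow hfd hfd' hhe hhe' heig
  simpa [Module.End.coe_pow] using hk a ha

/-- let `X` be a nilpotent formal vector field on `ℂⁿ` singular at `0`
(a ℂ-derivation of `ℂ[[x₁,…,xₙ]]` preserving `m` whose linear part on `m/m²` is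
nilpotent).  If `f, h` are nonzero power series and `λ ∈ ℂ` satisfies
`h·X(f) − f·X(h) = λ·f·h` (i.e. `X(f/h) = λ·(f/h)` in the fraction field), then `λ = 0`. -/
theorem eigenvalue_eq_zero_of_nilpotentVF (n : ℕ) (hn : 1 ≤ n)
    (X : Derivation ℂ (MvPowerSeries (Fin n) ℂ) (MvPowerSeries (Fin n) ℂ))
    (hsing : ∀ f ∈ mIdeal n, X f ∈ mIdeal n)
    (hnilX : ∃ k : ℕ, ∀ f ∈ mIdeal n,
      ((X.toLinearMap : Module.End ℂ (MvPowerSeries (Fin n) ℂ)) ^ k) f ∈ (mIdeal n) ^ 2)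
    (f h : MvPowerSeries (Fin n) ℂ) (hf : f ≠ 0) (hh : h ≠ 0) (lam : ℂ)
    (heig : h * X f - f * X h = lam • (f * h)) :
    lam = 0 :=
  eigenvalue_eq_zero_of_nilpotentVF_general n X hsing hnilX f h hf hh lam heig
end

section
/- Let n ≥ 1, let A = (a_{ij}) be a nilpotent n×n complex matrix and let Y be the ℂ-derivation of the polynomial ring ℂ[x₁,…,xₙ] determined by Y(xᵢ) = Σⱼ a_{ij}·xⱼ. If α ∈ ℂ[x₁,…,xₙ] is a nonzero homogeneous polynomial and μ ∈ ℂ satisfies Y(α) = μ·α, then μ = 0. -/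
/-!
A linear derivation `Y` with nilpotent matrix `A` is locally nilpotent: `Y^[m] xᵢ` is the
linear form with coefficients `(A ^ m)ᵢ`, and by the Leibniz rule the elements killed by some
iterate of a derivation form a subalgebra, which therefore is everything. An eigenvector
`Y α = μ • α` then satisfies `0 = Y^[N] α = μ ^ N • α`, so `μ = 0`.
-/

open MvPolynomial

namespace Derivation

variable {R A : Type*} [CommSemiring R] [CommSemiring A] [Algebra R A] (D : Derivation R A A)

theorem iterate_mul_eq_zero {a b : ℕ} {p q : A} (hp : (⇑D)^[a] p = 0) (hq : (⇑D)^[b] q = 0) :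
    (⇑D)^[a + b] (p * q) = 0 := by
  induction a generalizing b p q with
  | zero => simp_all
  | succ a iha =>
    induction b generalizing q with
    | zero => simp_all
    | succ b ihb =>
      have hleft : (⇑D)^[a + 1 + b] (p * D q) = 0 :=
        ihb (by rwa [← Function.iterate_succ_apply])
      have hright : (⇑D)^[a + (b + 1)] (D p * q) = 0 :=
        iha (by rwa [← Function.iterate_succ_apply]) hq
      rw [show a + 1 + (b + 1) = (a + 1 + b) + 1 by omega, Function.iterate_succ_apply,
        leibniz, smul_eq_mul, smul_eq_mul, iterate_map_add, hleft,
        show a + 1 + b = a + (b + 1) by omega, mul_comm, hright, add_zero]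

def locallyNilpotentSubalgebra : Subalgebra R A where
  carrier := {p | ∃ n, (⇑D)^[n] p = 0}
  mul_mem' := fun ⟨a, hp⟩ ⟨b, hq⟩ => ⟨a + b, D.iterate_mul_eq_zero hp hq⟩
  add_mem' := fun {p q} ⟨a, hp⟩ ⟨b, hq⟩ => ⟨a + b, by
    rw [iterate_map_add, add_comm a, Function.iterate_add_apply, add_comm b,
      Function.iterate_add_apply, hp, hq, iterate_map_zero, iterate_map_zero, add_zero]⟩
  algebraMap_mem' r := ⟨1, by simp⟩

theorem exists_iterate_eq_zero_of_adjoin_eq_top {s : Set A} (hs : Algebra.adjoin R s = ⊤)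
    (h : ∀ x ∈ s, ∃ n, (⇑D)^[n] x = 0) (p : A) : ∃ n, (⇑D)^[n] p = 0 :=
  Algebra.adjoin_le (S := D.locallyNilpotentSubalgebra) h (hs ▸ Algebra.mem_top)

end Derivation

namespace MvPolynomial

variable {σ R : Type*} [Fintype σ] [DecidableEq σ] [CommSemiring R]

theorem iterate_derivation_X_of_apply_X_eq_sum (M : Matrix σ σ R)
    (D : Derivation R (MvPolynomial σ R) (MvPolynomial σ R))
    (hD : ∀ i, D (X i) = ∑ j, C (M i j) * X j) (m : ℕ) (i : σ) :
    (⇑D)^[m] (X i) = ∑ j, C ((M ^ m) i j) * X j := by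
  simp only [C_mul'] at hD ⊢
  induction m with
  | zero => simp [Matrix.one_apply]
  | succ m ih =>
    simp only [Function.iterate_succ_apply', ih, map_sum, Derivation.map_smul, hD,
      Finset.smul_sum, smul_smul]
    rw [Finset.sum_comm]
    simp only [← Finset.sum_smul, pow_succ, Matrix.mul_apply]

theorem exists_iterate_derivation_eq_zero_of_isNilpotent {M : Matrix σ σ R} (hM : IsNilpotent M)
    {D : Derivation R (MvPolynomial σ R) (MvPolynomial σ R)}
    (hD : ∀ i, D (X i) = ∑ j, C (M i j) * X j) (p : MvPolynomial σ R) :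
    ∃ n, (⇑D)^[n] p = 0 := by
  obtain ⟨k, hk⟩ := hM
  refine D.exists_iterate_eq_zero_of_adjoin_eq_top adjoin_range_X ?_ p
  rintro _ ⟨i, rfl⟩
  exact ⟨k, by simp [iterate_derivation_X_of_apply_X_eq_sum M D hD, hk]⟩

end MvPolynomial

theorem eigenvalue_eq_zero_of_nilpotent_linear_derivation_general (n : ℕ)
    (A : Matrix (Fin n) (Fin n) ℂ) (hA : IsNilpotent A)
    (Y : Derivation ℂ (MvPolynomial (Fin n) ℂ) (MvPolynomial (Fin n) ℂ))
    (hY : ∀ i, Y (MvPolynomial.X i) =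
      ∑ j : Fin n, MvPolynomial.C (A i j) * MvPolynomial.X j)
    (α : MvPolynomial (Fin n) ℂ) (hα0 : α ≠ 0)
    (μ : ℂ) (heig : Y α = μ • α) :
    μ = 0 := by
  obtain ⟨N, hN⟩ := exists_iterate_derivation_eq_zero_of_isNilpotent hA hY α
  have hvec : Module.End.HasEigenvector Y.toLinearMap μ α :=
    Module.End.hasEigenvector_iff.2 ⟨Module.End.mem_eigenspace_iff.2 heig, hα0⟩
  have hpow : (⇑Y)^[N] α = μ ^ N • α := by
    rw [← hvec.pow_apply N, Module.End.pow_apply]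
    rfl
  rw [hpow, smul_eq_zero] at hN
  exact eq_zero_of_pow_eq_zero (hN.resolve_right hα0)

/-- let `A` be a nilpotent `n×n` complex matrix and `Y` the ℂ-derivation
of the polynomial ring `ℂ[x₁,…,xₙ]` with `Y(xᵢ) = Σⱼ aᵢⱼ·xⱼ`.  If `α` is a nonzero
homogeneous polynomial and `Y(α) = μ·α` for some `μ ∈ ℂ`, then `μ = 0`. -/
theorem eigenvalue_eq_zero_of_nilpotent_linear_derivation (n : ℕ) (hn : 1 ≤ n)
    (A : Matrix (Fin n) (Fin n) ℂ) (hA : IsNilpotent A)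
    (Y : Derivation ℂ (MvPolynomial (Fin n) ℂ) (MvPolynomial (Fin n) ℂ))
    (hY : ∀ i, Y (MvPolynomial.X i) =
      ∑ j : Fin n, MvPolynomial.C (A i j) * MvPolynomial.X j)
    (α : MvPolynomial (Fin n) ℂ) (d : ℕ) (hα : α.IsHomogeneous d) (hα0 : α ≠ 0)
    (μ : ℂ) (heig : Y α = μ • α) :
    μ = 0 :=
  eigenvalue_eq_zero_of_nilpotent_linear_derivation_general n A hA Y hY α hα0 μ heig
end

section
/- Fix n ≥ 1 and consider the following subspaces of the Lie algebra of formal vector fields on ℂⁿ singular at 0: for 1 ≤ j ≤ n−1, Uⱼ = { a·∂/∂xⱼ : a ∈ m², a ∈ ℂ[[x_{j+1},…,xₙ]] } and Vⱼ = { xⱼ·b·∂/∂xⱼ : b ∈ m, b ∈ ℂ[[x_{j+1},…,xₙ]] }, together with Uₙ = { t·xₙ²·∂/∂xₙ : t ∈ ℂ } and Vₙ = { t·xₙ·∂/∂xₙ : t ∈ ℂ }. Let G₀ = U₁ + V₁ + … + Uₙ + Vₙ. Then G₀ is a Lie subalgebra of X̂(ℂⁿ,0) whose derived length is exactly 2n: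 the 2n-th derived algebra G₀⁽²ⁿ⁾ is zero while G₀⁽²ⁿ⁻¹⁾ is nonzero. -/
/-- `a` involves only the variables `x_i` with `i > j`, i.e. `a ∈ ℂ[[x_{j+1},…,xₙ]]`:
every monomial of `a` containing a variable `x_i` with `i ≤ j` has zero coefficient. -/
def OnlyVarsAfter (n : ℕ) (j : Fin n) (a : MvPowerSeries (Fin n) ℂ) : Prop :=
  ∀ d : Fin n →₀ ℕ, (∃ i : Fin n, i ≤ j ∧ d i ≠ 0) → (MvPowerSeries.coeff d : MvPowerSeries (Fin n) ℂ →ₗ[ℂ] ℂ) a = 0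

namespace MvPowerSeries

open Finsupp

variable {σ R : Type*} [CommRing R]

variable (R) in
def supported (s : Set σ) : Subalgebra R (MvPowerSeries σ R) where
  carrier := {f | ∀ e : σ →₀ ℕ, (∃ i ∉ s, e i ≠ 0) → coeff e f = 0}
  mul_mem' {f g} hf hg e he := by
    classical
    obtain ⟨i, hi, hei⟩ := he
    rw [coeff_mul]
    refine Finset.sum_eq_zero fun pq hpq => ?_
    rw [Finset.HasAntidiagonal.mem_antidiagonal] at hpq
    have : pq.1 i ≠ 0 ∨ pq.2 i ≠ 0 := by
      by_contra! h
      exact hei (by rw [← hpq, Finsupp.add_apply, h.1, h.2])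
    rcases this with h | h
    · rw [hf _ ⟨i, hi, h⟩, zero_mul]
    · rw [hg _ ⟨i, hi, h⟩, mul_zero]
  add_mem' hf hg e he := by rw [map_add, hf e he, hg e he, add_zero]
  algebraMap_mem' r e he := by
    classical
    obtain ⟨i, -, hei⟩ := he
    rw [algebraMap_apply, Algebra.algebraMap_self, RingHom.id_apply, coeff_C,
      if_neg (by rintro rfl; exact hei rfl)]

variable {s t : Set σ} {D : Derivation R (MvPowerSeries σ R) (MvPowerSeries σ R)}

theorem X_ne_zero [Nontrivial R] (i : σ) : (X i : MvPowerSeries σ R) ≠ 0 :=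
  nonZeroDivisors.ne_zero X_mem_nonzeroDivisors

theorem supported_mono (h : s ⊆ t) : supported R s ≤ supported R t :=
  fun _ hf e ⟨i, hi, hei⟩ => hf e ⟨i, fun his => hi (h his), hei⟩

theorem X_mem_supported {i : σ} (hi : i ∈ s) : X i ∈ supported R s := by
  classical
  rintro e ⟨i', hi', hei'⟩
  rw [coeff_X, if_neg]
  rintro rfl
  rw [single_apply, if_neg (by rintro rfl; exact hi' hi)] at hei'
  exact hei' rfl

theorem pderiv_mem_supported {f : MvPowerSeries σ R} (hf : f ∈ supported R s) (i : σ) :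
    pderiv R i f ∈ supported R s := by
  rintro e ⟨i', hi', hei'⟩
  rw [coeff_pderiv, hf _ ⟨i', hi', by simp [hei']⟩, zero_mul]

theorem pderiv_eq_zero_of_notMem {f : MvPowerSeries σ R} (hf : f ∈ supported R s) {i : σ}
    (hi : i ∉ s) : pderiv R i f = 0 := by
  ext e
  rw [coeff_pderiv, hf _ ⟨i, hi, by simp⟩, zero_mul, map_zero]

theorem exists_eq_sum_X_pow_mul_add (f : MvPowerSeries σ R) (n : σ →₀ ℕ) (s : Finset σ) :
    ∃ (g : σ → MvPowerSeries σ R) (r : MvPowerSeries σ R),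
      f = ∑ i ∈ s, X i ^ (n i + 1) * g i + r ∧
        ∀ e, (∃ i ∈ s, n i < e i) → coeff e r = 0 := by
  classical
  induction s using Finset.induction_on with
  | empty => exact ⟨0, f, by simp, by simp⟩
  | insert a s ha ih =>
    obtain ⟨g, r, hf, hr⟩ := ih
    let r' : MvPowerSeries σ R := fun e => if e a ≤ n a then coeff e r else 0
    have hr' : ∀ e, coeff e r' = if e a ≤ n a then coeff e r else 0 := fun _ => rfl
    obtain ⟨q, hq⟩ : X a ^ (n a + 1) ∣ r - r' := X_pow_dvd_iff.mpr fun e he => by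
      rw [map_sub, hr', if_pos (Nat.lt_succ_iff.mp he), sub_self]
    refine ⟨Function.update g a q, r', ?_, ?_⟩
    · rw [Finset.sum_insert ha, Function.update_self,
        Finset.sum_congr rfl fun i hi => by rw [Function.update_of_ne (ne_of_mem_of_not_mem hi ha)],
        hf, ← hq]
      ring
    · rintro e ⟨i, hi, hei⟩
      rw [hr']
      split_ifs with hea
      · obtain rfl | hi := Finset.mem_insert.mp hi
        · exact absurd hea (not_le.mpr hei)
        · exact hr e ⟨i, hi, hei⟩
      · rfl

theorem derivation_coe_eq_zero (hD : ∀ i, D (X i) = 0) (p : MvPolynomial σ R) : D p = 0 := by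
  induction p using MvPolynomial.induction_on with
  | C a => rw [MvPolynomial.coe_C]; exact D.map_algebraMap a
  | add p q hp hq => rw [MvPolynomial.coe_add, map_add, hp, hq, add_zero]
  | mul_X p i hp =>
    rw [MvPolynomial.coe_mul, MvPolynomial.coe_X, D.leibniz, hp, hD, smul_zero, smul_zero,
      add_zero]

noncomputable def wronskian (i : σ) (p q : MvPowerSeries σ R) : MvPowerSeries σ R :=
  p * pderiv R i q - q * pderiv R i p

theorem wronskian_add_X_mul {i : σ} {a b a' b' : MvPowerSeries σ R} (ha : pderiv R i a = 0)
    (hb : pderiv R i b = 0) (ha' : pderiv R i a' = 0) (hb' : pderiv R i b' = 0) :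
    wronskian i (a + X i * b) (a' + X i * b') = a * b' - a' * b := by
  simp only [wronskian, map_add, Derivation.leibniz, pderiv_X_self, ha, hb, ha', hb', smul_eq_mul]
  ring

theorem wronskian_quadratic (i : σ) (t s t' s' : R) :
    wronskian i (t • X i ^ 2 + s • X i) (t' • X i ^ 2 + s' • X i) =
      (s * t' - t * s') • (X i ^ 2 : MvPowerSeries σ R) := by
  simp only [wronskian, map_add, Derivation.map_smul, pderiv_pow, pderiv_X_self]
  simp only [smul_eq_C_mul, map_sub, map_mul]
  ring

variable [Fintype σ]

theorem derivation_eq_zero_of_map_X (hD : ∀ i, D (X i) = 0) : D = 0 := by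
  classical
  ext f d
  obtain ⟨g, r, rfl, hr⟩ := exists_eq_sum_X_pow_mul_add f d Finset.univ
  have hr : r = (trunc' R d r : MvPowerSeries σ R) := by
    ext e
    rw [MvPolynomial.coeff_coe, coeff_trunc']
    split_ifs with he
    · rfl
    · obtain ⟨i, hi⟩ := not_forall.mp (mt Finsupp.le_def.mpr he)
      exact hr e ⟨i, Finset.mem_univ i, not_le.mp hi⟩
  have hX : ∀ i k, D (X i ^ k) = 0 := fun i k => by rw [D.leibniz_pow, hD, smul_zero, smul_zero]
  rw [hr, map_add, derivation_coe_eq_zero hD, add_zero, map_sum, map_sum]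
  refine Finset.sum_eq_zero fun i _ => ?_
  rw [D.leibniz, hX, smul_zero, add_zero, smul_eq_mul,
    X_pow_dvd_iff.mp (dvd_mul_right _ _) d (Nat.lt_succ_self _)]

theorem derivation_ext {D₁ D₂ : Derivation R (MvPowerSeries σ R) (MvPowerSeries σ R)}
    (h : ∀ i, D₁ (X i) = D₂ (X i)) : D₁ = D₂ :=
  sub_eq_zero.mp <| derivation_eq_zero_of_map_X fun i => by rw [Derivation.sub_apply, h, sub_self]

theorem derivation_eq_sum_mul_pderiv
    (D : Derivation R (MvPowerSeries σ R) (MvPowerSeries σ R)) (f : MvPowerSeries σ R) :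
    D f = ∑ i, D (X i) * pderiv R i f := by
  have hsum : ∀ g, (∑ i, D (X i) • pderiv R i) g = ∑ i, D (X i) * pderiv R i g := fun _ => by
    rw [← Derivation.coeFnAddMonoidHom_apply, map_sum, Finset.sum_apply]
    rfl
  have hD : ∑ i, D (X i) • pderiv R i = D := derivation_ext fun k => by
    rw [hsum, Finset.sum_eq_single k (fun i _ hi => by rw [pderiv_X_of_ne (Ne.symm hi), mul_zero])
      (by simp), pderiv_X_self, mul_one]
  rw [← hsum, hD]

theorem derivation_mem_supported (hD : ∀ i ∈ s, D (X i) ∈ supported R s)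
    {f : MvPowerSeries σ R} (hf : f ∈ supported R s) : D f ∈ supported R s := by
  rw [derivation_eq_sum_mul_pderiv]
  refine Subalgebra.sum_mem _ fun i _ => ?_
  by_cases hi : i ∈ s
  · exact Subalgebra.mul_mem _ (hD i hi) (pderiv_mem_supported hf i)
  · rw [pderiv_eq_zero_of_notMem hf hi, mul_zero]
    exact Subalgebra.zero_mem _

theorem derivation_mem_of_map_X_mem {I : Ideal (MvPowerSeries σ R)} (hD : ∀ i, D (X i) ∈ I)
    (f : MvPowerSeries σ R) : D f ∈ I := by
  rw [derivation_eq_sum_mul_pderiv]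
  exact Ideal.sum_mem _ fun i _ => I.mul_mem_right _ (hD i)

theorem derivation_eq_mul_pderiv_of_mem_supported_Ici [LinearOrder σ] {j : σ}
    (hD : ∀ i > j, D (X i) = 0) {f : MvPowerSeries σ R} (hf : f ∈ supported R (Set.Ici j)) :
    D f = D (X j) * pderiv R j f := by
  rw [derivation_eq_sum_mul_pderiv, Finset.sum_eq_single j _ (by simp)]
  intro i _ hij
  rcases hij.lt_or_gt with hij | hij
  · rw [pderiv_eq_zero_of_notMem hf (not_le.mpr hij), mul_zero]
  · rw [hD i hij, zero_mul]

theorem derivation_lie_apply_X [LinearOrder σ]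
    {D₁ D₂ : Derivation R (MvPowerSeries σ R) (MvPowerSeries σ R)} {j : σ}
    (h₁ : ∀ i > j, D₁ (X i) = 0) (h₂ : ∀ i > j, D₂ (X i) = 0)
    (h₁j : D₁ (X j) ∈ supported R (Set.Ici j)) (h₂j : D₂ (X j) ∈ supported R (Set.Ici j)) :
    ⁅D₁, D₂⁆ (X j) = wronskian j (D₁ (X j)) (D₂ (X j)) := by
  rw [Derivation.commutator_apply, derivation_eq_mul_pderiv_of_mem_supported_Ici h₁ h₂j,
    derivation_eq_mul_pderiv_of_mem_supported_Ici h₂ h₁j, wronskian]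

theorem lie_smul_pderiv (u v : MvPowerSeries σ R) (i k : σ) :
    ⁅u • pderiv R i, v • pderiv R k⁆ =
      (u * pderiv R i v) • pderiv R k - (v * pderiv R k u) • pderiv R i := by
  classical
  refine derivation_ext fun l => ?_
  simp only [Derivation.commutator_apply, Derivation.sub_apply, Derivation.smul_apply, smul_eq_mul,
    pderiv_X, Derivation.leibniz]
  by_cases hk : k = l <;> by_cases hi : i = l <;> simp [hk, hi]

theorem lie_smul_pderiv_of_pderiv_eq_zero {u : MvPowerSeries σ R} {i k : σ}
    (hu : pderiv R k u = 0) (v : MvPowerSeries σ R) :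
    ⁅u • pderiv R i, v • pderiv R k⁆ = (u * pderiv R i v) • pderiv R k := by
  rw [lie_smul_pderiv, hu, mul_zero, zero_smul, sub_zero]

end MvPowerSeries

theorem Derivation.map_mem_sq_of_forall_mem {R A : Type*} [CommRing R] [CommRing A] [Algebra R A]
    {D : Derivation R A A} {I : Ideal A} (hD : ∀ a, D a ∈ I) {a : A} (ha : a ∈ I ^ 2) :
    D a ∈ I ^ 2 := by
  rw [sq] at ha ⊢
  induction ha using Submodule.mul_induction_on' with
  | mem_mul_mem a ha b hb =>
    rw [D.leibniz, smul_eq_mul, smul_eq_mul]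
    exact add_mem (Ideal.mul_mem_mul ha (hD b)) (Ideal.mul_mem_mul hb (hD a))
  | add x _ y _ hx hy => rw [map_add]; exact add_mem hx hy

namespace LieSubalgebra

open LieAlgebra

variable {R L : Type*} [CommRing R] [LieRing L] [LieAlgebra R L] (K : LieSubalgebra R L)

def derivedSeriesSet (k : ℕ) : Set L := (↑) '' (derivedSeries R K k : Set K)

variable {K}

theorem mem_derivedSeriesSet_zero {x : L} (hx : x ∈ K) : x ∈ K.derivedSeriesSet 0 :=
  ⟨⟨x, hx⟩, LieSubmodule.mem_top _, rfl⟩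

theorem derivedSeriesSet_subset (k : ℕ) : K.derivedSeriesSet k ⊆ K := by
  rintro _ ⟨x, -, rfl⟩
  exact x.2

theorem derivedSeriesSet_antitone : Antitone K.derivedSeriesSet := by
  rintro k l hkl _ ⟨x, hx, rfl⟩
  exact ⟨x, derivedSeriesOfIdeal_antitone _ hkl hx, rfl⟩

theorem lie_mem_derivedSeriesSet {k : ℕ} {x y : L} (hx : x ∈ K.derivedSeriesSet k)
    (hy : y ∈ K.derivedSeriesSet k) : ⁅x, y⁆ ∈ K.derivedSeriesSet (k + 1) := by
  obtain ⟨x, hx, rfl⟩ := hx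
  obtain ⟨y, hy, rfl⟩ := hy
  refine ⟨⁅x, y⁆, ?_, rfl⟩
  rw [SetLike.mem_coe, derivedSeries_def, derivedSeriesOfIdeal_succ]
  exact LieSubmodule.lie_mem_lie hx hy

theorem derivedSeriesSet_succ_subset {k : ℕ} {P : Submodule R L}
    (h : ∀ x ∈ K.derivedSeriesSet k, ∀ y ∈ K.derivedSeriesSet k, ⁅x, y⁆ ∈ P) :
    K.derivedSeriesSet (k + 1) ⊆ P := by
  rintro _ ⟨z, hz, rfl⟩
  rw [SetLike.mem_coe, derivedSeries_def, derivedSeriesOfIdeal_succ,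
    ← LieSubmodule.mem_toSubmodule, LieSubmodule.lieIdeal_oper_eq_linear_span'] at hz
  refine Submodule.span_le (p := P.comap K.incl.toLinearMap) |>.mpr ?_ hz
  rintro _ ⟨x, hx, y, hy, rfl⟩
  exact h _ ⟨x, hx, rfl⟩ _ ⟨y, hy, rfl⟩

theorem derivedSeries_eq_bot_iff {k : ℕ} :
    derivedSeries R K k = ⊥ ↔ K.derivedSeriesSet k ⊆ {0} := by
  rw [LieSubmodule.eq_bot_iff]
  constructor
  · rintro h _ ⟨x, hx, rfl⟩
    rw [h x hx]
    rfl
  · intro h x hx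
    exact Subtype.ext (h ⟨x, hx, rfl⟩)

theorem exists_mem_derivedSeriesSet_of_lie {a : L} {N : ℕ} (ha : a ∈ K.derivedSeriesSet N)
    {P : L → Prop} (hP : ∀ x, P x → P ⁅a, x⁆) {x₀ : L} (hx₀ : x₀ ∈ K) (h₀ : P x₀) :
    ∀ m ≤ N + 1, ∃ x ∈ K.derivedSeriesSet m, P x := by
  intro m hm
  induction m with
  | zero => exact ⟨x₀, mem_derivedSeriesSet_zero hx₀, h₀⟩
  | succ m ih =>
    obtain ⟨x, hx, hPx⟩ := ih (by omega)
    exact ⟨⁅a, x⁆, lie_mem_derivedSeriesSet (derivedSeriesSet_antitone (by omega) ha) hx,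
      hP x hPx⟩

end LieSubalgebra

open MvPowerSeries LieSubalgebra

namespace FormalVectorField

variable {n : ℕ}

abbrev VectorField (n : ℕ) :=
  Derivation ℂ (MvPowerSeries (Fin n) ℂ) (MvPowerSeries (Fin n) ℂ)

/-- The `xⱼ`-components of the fields in `Uⱼ + Vⱼ`. -/
noncomputable def componentSpace (n : ℕ) (j : Fin n) :
    Submodule ℂ (MvPowerSeries (Fin n) ℂ) :=
  if (j : ℕ) < n - 1 then
    ((mIdeal n ^ 2).restrictScalars ℂ ⊓ (supported ℂ (Set.Ioi j)).toSubmodule) ⊔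
      ((mIdeal n).restrictScalars ℂ ⊓ (supported ℂ (Set.Ioi j)).toSubmodule).map
        (LinearMap.mulLeft ℂ (X j))
  else Submodule.span ℂ {X j ^ 2, X j}

theorem mem_componentSpace_of_lt {j : Fin n} (hj : (j : ℕ) < n - 1)
    {h : MvPowerSeries (Fin n) ℂ} :
    h ∈ componentSpace n j ↔ ∃ a b, a ∈ supported ℂ (Set.Ioi j) ∧
      b ∈ supported ℂ (Set.Ioi j) ∧ a ∈ mIdeal n ^ 2 ∧ b ∈ mIdeal n ∧ h = a + X j * b := by
  simp only [componentSpace, if_pos hj, Submodule.mem_sup, Submodule.mem_map, Submodule.mem_inf,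
    Submodule.restrictScalars_mem, Subalgebra.mem_toSubmodule, LinearMap.mulLeft_apply]
  constructor
  · rintro ⟨a, ⟨ha2, haS⟩, _, ⟨b, ⟨hbm, hbS⟩, rfl⟩, rfl⟩
    exact ⟨a, b, haS, hbS, ha2, hbm, rfl⟩
  · rintro ⟨a, b, haS, hbS, ha2, hbm, rfl⟩
    exact ⟨a, ⟨ha2, haS⟩, _, ⟨b, ⟨hbm, hbS⟩, rfl⟩, rfl⟩

theorem mem_componentSpace_last {j : Fin n} (hj : ¬ (j : ℕ) < n - 1)
    {h : MvPowerSeries (Fin n) ℂ} :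
    h ∈ componentSpace n j ↔ ∃ t s : ℂ, h = t • X j ^ 2 + s • X j := by
  rw [componentSpace, if_neg hj, Submodule.mem_span_pair]
  exact ⟨fun ⟨t, s, h⟩ => ⟨t, s, h.symm⟩, fun ⟨t, s, h⟩ => ⟨t, s, h.symm⟩⟩

theorem X_mem_mIdeal (i : Fin n) : X i ∈ mIdeal n := by
  simp [mIdeal]

theorem notMem_Ioi_of_not_lt {j : Fin n} (hj : ¬ (j : ℕ) < n - 1) (i : Fin n) :
    i ∉ Set.Ioi j := by
  simp only [Set.mem_Ioi, Fin.lt_def]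
  omega

theorem componentSpace_le (j : Fin n) :
    componentSpace n j ≤ (mIdeal n).restrictScalars ℂ ⊓ (supported ℂ (Set.Ici j)).toSubmodule := by
  intro h hh
  have hXS : X j ∈ supported ℂ (Set.Ici j) := X_mem_supported Set.self_mem_Ici
  by_cases hj : (j : ℕ) < n - 1
  · obtain ⟨a, b, haS, hbS, ha2, hbm, rfl⟩ := (mem_componentSpace_of_lt hj).mp hh
    have hIoi := supported_mono (R := ℂ) (Set.Ioi_subset_Ici_self (a := j))
    exact ⟨add_mem (Ideal.pow_le_self two_ne_zero ha2) (Ideal.mul_mem_left _ _ hbm),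
      add_mem (hIoi haS) (Subalgebra.mul_mem _ hXS (hIoi hbS))⟩
  · obtain ⟨t, s, rfl⟩ := (mem_componentSpace_last hj).mp hh
    exact ⟨add_mem
      (Submodule.smul_of_tower_mem _ _ (Ideal.pow_mem_of_mem _ (X_mem_mIdeal j) 2 two_pos))
      (Submodule.smul_of_tower_mem _ _ (X_mem_mIdeal j)),
      add_mem (Subalgebra.smul_mem _ (Subalgebra.pow_mem _ hXS 2) t)
        (Subalgebra.smul_mem _ hXS s)⟩

section

variable {ξ η : VectorField n} (hξ : ∀ j, ξ (X j) ∈ componentSpace n j)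
include hξ

theorem map_mem_mIdeal (f : MvPowerSeries (Fin n) ℂ) : ξ f ∈ mIdeal n :=
  derivation_mem_of_map_X_mem (fun i => (componentSpace_le i (hξ i)).1) f

theorem map_mem_mIdeal_sq {f : MvPowerSeries (Fin n) ℂ} (hf : f ∈ mIdeal n ^ 2) :
    ξ f ∈ mIdeal n ^ 2 :=
  Derivation.map_mem_sq_of_forall_mem (map_mem_mIdeal hξ) hf

theorem map_mem_supported_Ioi (j : Fin n) {f : MvPowerSeries (Fin n) ℂ}
    (hf : f ∈ supported ℂ (Set.Ioi j)) : ξ f ∈ supported ℂ (Set.Ioi j) :=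
  derivation_mem_supported (fun i hi =>
    supported_mono (Set.Ici_subset_Ioi.mpr hi) (componentSpace_le i (hξ i)).2) hf

theorem map_mem_componentSpace_of_lt {j : Fin n} (hj : (j : ℕ) < n - 1)
    {h : MvPowerSeries (Fin n) ℂ} (hh : h ∈ componentSpace n j) : ξ h ∈ componentSpace n j := by
  obtain ⟨a, b, haS, hbS, ha2, hbm, rfl⟩ := (mem_componentSpace_of_lt hj).mp hh
  obtain ⟨a₀, b₀, ha₀S, hb₀S, ha₀2, hb₀m, hξj⟩ := (mem_componentSpace_of_lt hj).mp (hξ j)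
  refine (mem_componentSpace_of_lt hj).mpr ⟨ξ a + a₀ * b, b₀ * b + ξ b,
    Subalgebra.add_mem _ (map_mem_supported_Ioi hξ j haS) (Subalgebra.mul_mem _ ha₀S hbS),
    Subalgebra.add_mem _ (Subalgebra.mul_mem _ hb₀S hbS) (map_mem_supported_Ioi hξ j hbS),
    add_mem (map_mem_mIdeal_sq hξ ha2) (Ideal.mul_mem_right _ _ ha₀2),
    add_mem (Ideal.mul_mem_right _ _ hb₀m) (map_mem_mIdeal hξ b), ?_⟩
  rw [map_add, Derivation.leibniz, hξj, smul_eq_mul, smul_eq_mul]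
  ring

theorem lie_mem_componentSpace (hη : ∀ j, η (X j) ∈ componentSpace n j) (j : Fin n) :
    ⁅ξ, η⁆ (X j) ∈ componentSpace n j := by
  by_cases hj : (j : ℕ) < n - 1
  · rw [Derivation.commutator_apply]
    exact sub_mem (map_mem_componentSpace_of_lt hξ hj (hη j))
      (map_mem_componentSpace_of_lt hη hj (hξ j))
  · have hnone : ∀ i > j, False := fun i hi => notMem_Ioi_of_not_lt hj i hi
    rw [derivation_lie_apply_X (fun i hi => (hnone i hi).elim) (fun i hi => (hnone i hi).elim)
      (componentSpace_le j (hξ j)).2 (componentSpace_le j (hη j)).2]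
    obtain ⟨t, s, hξj⟩ := (mem_componentSpace_last hj).mp (hξ j)
    obtain ⟨t', s', hηj⟩ := (mem_componentSpace_last hj).mp (hη j)
    rw [mem_componentSpace_last hj, hξj, hηj, wronskian_quadratic]
    exact ⟨s * t' - t * s', 0, by rw [zero_smul, add_zero]⟩

end

noncomputable def g0 (n : ℕ) : LieSubalgebra ℂ (VectorField n) where
  carrier := {ξ | ∀ j, ξ (X j) ∈ componentSpace n j}
  add_mem' hξ hη j := add_mem (hξ j) (hη j)
  zero_mem' _ := zero_mem _
  smul_mem' c _ hξ j := Submodule.smul_mem _ c (hξ j)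
  lie_mem' hξ hη := lie_mem_componentSpace hξ hη

theorem mem_g0 {ξ : VectorField n} : ξ ∈ g0 n ↔ ∀ j, ξ (X j) ∈ componentSpace n j :=
  Iff.rfl

theorem onlyVarsAfter_iff {j : Fin n} {a : MvPowerSeries (Fin n) ℂ} :
    OnlyVarsAfter n j a ↔ a ∈ supported ℂ (Set.Ioi j) := by
  simp only [OnlyVarsAfter, supported, Set.mem_Ioi, not_lt]
  rfl

theorem mem_g0_iff {ξ : VectorField n} : ξ ∈ g0 n ↔
    ((∀ j : Fin n, (j : ℕ) < n - 1 → ∃ a b, OnlyVarsAfter n j a ∧ OnlyVarsAfter n j b ∧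
      a ∈ mIdeal n ^ 2 ∧ b ∈ mIdeal n ∧ ξ (X j) = a + X j * b) ∧
      (∀ j : Fin n, (j : ℕ) = n - 1 → ∃ t s : ℂ, ξ (X j) = t • X j ^ 2 + s • X j)) := by
  simp only [mem_g0, onlyVarsAfter_iff]
  constructor
  · intro h
    exact ⟨fun j hj => (mem_componentSpace_of_lt hj).mp (h j),
      fun j hj => (mem_componentSpace_last (by omega)).mp (h j)⟩
  · rintro ⟨hlt, hlast⟩ j
    by_cases hj : (j : ℕ) < n - 1
    · exact (mem_componentSpace_of_lt hj).mpr (hlt j hj)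
    · exact (mem_componentSpace_last hj).mpr (hlast j (by have := j.isLt; omega))

def zeroComponents (s : Set (Fin n)) : Submodule ℂ (VectorField n) where
  carrier := {ξ | ∀ i ∈ s, ξ (X i) = 0}
  add_mem' hξ hη i hi := by rw [Derivation.add_apply, hξ i hi, hη i hi, add_zero]
  zero_mem' _ _ := rfl
  smul_mem' c _ hξ i hi := by rw [Derivation.smul_apply, hξ i hi, smul_zero]

noncomputable def derivedComponentSpace (j : Fin n) : Submodule ℂ (MvPowerSeries (Fin n) ℂ) :=
  if (j : ℕ) < n - 1 then (supported ℂ (Set.Ioi j)).toSubmodule else ℂ ∙ X j ^ 2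

noncomputable def oddLayer (j : Fin n) : Submodule ℂ (VectorField n) where
  carrier := {ξ | (∀ i > j, ξ (X i) = 0) ∧ ξ (X j) ∈ derivedComponentSpace j}
  add_mem' hξ hη := ⟨(zeroComponents (Set.Ioi j)).add_mem hξ.1 hη.1, add_mem hξ.2 hη.2⟩
  zero_mem' := ⟨(zeroComponents (Set.Ioi j)).zero_mem, zero_mem _⟩
  smul_mem' c _ hξ :=
    ⟨(zeroComponents (Set.Ioi j)).smul_mem c hξ.1, Submodule.smul_mem _ c hξ.2⟩

theorem derivedComponentSpace_le (j : Fin n) :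
    derivedComponentSpace j ≤ (supported ℂ (Set.Ici j)).toSubmodule := by
  unfold derivedComponentSpace
  split_ifs
  · exact supported_mono Set.Ioi_subset_Ici_self
  · rw [Submodule.span_le, Set.singleton_subset_iff]
    exact Subalgebra.pow_mem _ (X_mem_supported Set.self_mem_Ici) 2

theorem lie_mem_oddLayer {j : Fin n} {ξ η : VectorField n} (hξ : ξ ∈ g0 n) (hη : η ∈ g0 n)
    (hξ' : ξ ∈ zeroComponents (Set.Ioi j)) (hη' : η ∈ zeroComponents (Set.Ioi j)) :
    ⁅ξ, η⁆ ∈ oddLayer j := by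
  refine ⟨fun i hi => ?_, ?_⟩
  · rw [Derivation.commutator_apply, hξ' i hi, hη' i hi, map_zero, map_zero, sub_zero]
  rw [derivation_lie_apply_X hξ' hη' (componentSpace_le j (hξ j)).2 (componentSpace_le j (hη j)).2,
    derivedComponentSpace]
  split_ifs with hj
  · obtain ⟨a, b, haS, hbS, -, -, hξj⟩ := (mem_componentSpace_of_lt hj).mp (hξ j)
    obtain ⟨a', b', ha'S, hb'S, -, -, hηj⟩ := (mem_componentSpace_of_lt hj).mp (hη j)
    have hj : j ∉ Set.Ioi j := Set.self_notMem_Ioi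
    rw [hξj, hηj, wronskian_add_X_mul (pderiv_eq_zero_of_notMem haS hj)
      (pderiv_eq_zero_of_notMem hbS hj) (pderiv_eq_zero_of_notMem ha'S hj)
      (pderiv_eq_zero_of_notMem hb'S hj)]
    exact Subalgebra.sub_mem _ (Subalgebra.mul_mem _ haS hb'S) (Subalgebra.mul_mem _ ha'S hbS)
  · obtain ⟨t, s, hξj⟩ := (mem_componentSpace_last hj).mp (hξ j)
    obtain ⟨t', s', hηj⟩ := (mem_componentSpace_last hj).mp (hη j)
    rw [hξj, hηj, wronskian_quadratic]
    exact Submodule.smul_mem _ _ (Submodule.mem_span_singleton_self _)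

theorem lie_mem_zeroComponents_Ici {j : Fin n} {ξ η : VectorField n} (hξ : ξ ∈ oddLayer j)
    (hη : η ∈ oddLayer j) : ⁅ξ, η⁆ ∈ zeroComponents (Set.Ici j) := by
  intro i hi
  obtain rfl | hi := (Set.mem_Ici.mp hi).eq_or_lt
  · rw [derivation_lie_apply_X hξ.1 hη.1 (derivedComponentSpace_le _ hξ.2)
      (derivedComponentSpace_le _ hη.2)]
    have hξj := hξ.2
    have hηj := hη.2
    unfold derivedComponentSpace at hξj hηj
    split_ifs at hξj hηj
    · rw [wronskian, pderiv_eq_zero_of_notMem hξj Set.self_notMem_Ioi,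
        pderiv_eq_zero_of_notMem hηj Set.self_notMem_Ioi, mul_zero, mul_zero, sub_zero]
    · obtain ⟨c, hc⟩ := Submodule.mem_span_singleton.mp hξj
      obtain ⟨c', hc'⟩ := Submodule.mem_span_singleton.mp hηj
      rw [← hc, ← hc']
      simpa using wronskian_quadratic j c 0 c' 0
  · rw [Derivation.commutator_apply, hξ.1 i hi, hη.1 i hi, map_zero, map_zero, sub_zero]

theorem derivedSeriesSet_g0_two_mul_subset {k : ℕ} (hk : k ≤ n) :
    (g0 n).derivedSeriesSet (2 * k) ⊆ zeroComponents {i : Fin n | n ≤ i + k} := by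
  induction k with
  | zero =>
    intro ξ _ i hi
    exact absurd hi (by simp [i.isLt])
  | succ k ih =>
    let j : Fin n := ⟨n - (k + 1), by omega⟩
    have hIoi : {i : Fin n | n ≤ i + k} = Set.Ioi j := by
      ext i; simp only [Set.mem_ofPred_eq, Set.mem_Ioi, Fin.lt_def, j]; omega
    have hIci : {i : Fin n | n ≤ i + (k + 1)} = Set.Ici j := by
      ext i; simp only [Set.mem_ofPred_eq, Set.mem_Ici, Fin.le_def, j]; omega
    have hhalf : (g0 n).derivedSeriesSet (2 * k + 1) ⊆ (oddLayer j : Set (VectorField n)) :=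
      derivedSeriesSet_succ_subset fun ξ hξ η hη =>
        lie_mem_oddLayer (derivedSeriesSet_subset _ hξ) (derivedSeriesSet_subset _ hη)
          (hIoi ▸ ih (by omega) hξ) (hIoi ▸ ih (by omega) hη)
    rw [hIci, show 2 * (k + 1) = 2 * k + 1 + 1 by ring]
    exact derivedSeriesSet_succ_subset fun ξ hξ η hη =>
      lie_mem_zeroComponents_Ici (hhalf hξ) (hhalf hη)

theorem derivedSeries_g0_two_mul_eq_bot : LieAlgebra.derivedSeries ℂ (g0 n) (2 * n) = ⊥ := by
  refine derivedSeries_eq_bot_iff.mpr fun ξ hξ =>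
    derivation_eq_zero_of_map_X fun i => derivedSeriesSet_g0_two_mul_subset le_rfl hξ i ?_
  simp

theorem smul_pderiv_mem_g0 {j : Fin n} {u : MvPowerSeries (Fin n) ℂ}
    (hu : u ∈ componentSpace n j) : u • pderiv ℂ j ∈ g0 n := by
  intro i
  rw [Derivation.smul_apply, pderiv_X, Pi.single_apply]
  split_ifs with hij
  · subst hij
    rwa [smul_eq_mul, mul_one]
  · rw [smul_zero]
    exact zero_mem _

theorem smul_pderiv_ne_zero {j : Fin n} {u : MvPowerSeries (Fin n) ℂ} (hu : u ≠ 0) :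
    u • pderiv ℂ j ≠ 0 := fun h => hu <| by
  simpa using congr($h (X j))

def HasDerivedPair (j : Fin n) (r : ℕ) : Prop :=
  ∃ f g : MvPowerSeries (Fin n) ℂ, f ∈ supported ℂ (Set.Ioi j) ∧ f ≠ 0 ∧
    g ∈ supported ℂ (Set.Ici j) ∧ g ≠ 0 ∧
    (X j * f) • pderiv ℂ j ∈ (g0 n).derivedSeriesSet (2 * r) ∧
    g • pderiv ℂ j ∈ (g0 n).derivedSeriesSet (2 * r + 1)

theorem hasDerivedPair_last {j : Fin n} (hj : (j : ℕ) = n - 1) : HasDerivedPair j 0 := by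
  have hj' : ¬ (j : ℕ) < n - 1 := by omega
  have hA : (X j * 1 : MvPowerSeries (Fin n) ℂ) • pderiv ℂ j ∈ g0 n :=
    smul_pderiv_mem_g0 ((mem_componentSpace_last hj').mpr ⟨0, 1, by simp⟩)
  have hC : (X j ^ 2 : MvPowerSeries (Fin n) ℂ) • pderiv ℂ j ∈ g0 n :=
    smul_pderiv_mem_g0 ((mem_componentSpace_last hj').mpr ⟨1, 0, by simp⟩)
  refine ⟨1, X j ^ 2, Subalgebra.one_mem _, one_ne_zero,
    Subalgebra.pow_mem _ (X_mem_supported Set.self_mem_Ici) 2, pow_ne_zero 2 (X_ne_zero j),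
    mem_derivedSeriesSet_zero hA, ?_⟩
  convert lie_mem_derivedSeriesSet (mem_derivedSeriesSet_zero hA) (mem_derivedSeriesSet_zero hC)
    using 1
  have key : X j * 1 * pderiv ℂ j (X j ^ 2) = X j ^ 2 + X j ^ 2 * pderiv ℂ j (X j * 1) := by
    simp only [pderiv_pow, pderiv_X_self, mul_one]
    ring
  rw [lie_smul_pderiv, key, add_smul, add_sub_cancel_right]

section Step

variable {j' j : Fin n} (hjj : (j' : ℕ) + 1 = j)
include hjj

theorem Ioi_eq_Ici_of_succ : Set.Ioi j' = Set.Ici j := by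
  ext i
  simp only [Set.mem_Ioi, Set.mem_Ici, Fin.lt_def, Fin.le_def]
  omega

theorem pderiv_eq_zero_of_mem_supported_Ici_of_succ {w : MvPowerSeries (Fin n) ℂ}
    (hw : w ∈ supported ℂ (Set.Ici j)) : pderiv ℂ j' w = 0 :=
  pderiv_eq_zero_of_notMem hw (by rw [← Ioi_eq_Ici_of_succ hjj]; exact Set.self_notMem_Ioi)

theorem exists_X_mul_X_mul_smul_pderiv_mem {f : MvPowerSeries (Fin n) ℂ}
    (hfS : f ∈ supported ℂ (Set.Ioi j)) (hf0 : f ≠ 0) {N : ℕ}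
    (hA : (X j * f) • pderiv ℂ j ∈ (g0 n).derivedSeriesSet N) :
    ∃ u ∈ supported ℂ (Set.Ioi j), u ≠ 0 ∧
      (X j' * (X j * u)) • pderiv ℂ j' ∈ (g0 n).derivedSeriesSet (N + 1) := by
  have hXj : X j ∈ supported ℂ (Set.Ici j) := X_mem_supported Set.self_mem_Ici
  have hpA : pderiv ℂ j' (X j * f) = 0 := pderiv_eq_zero_of_mem_supported_Ici_of_succ hjj
    (Subalgebra.mul_mem _ hXj (supported_mono Set.Ioi_subset_Ici_self hfS))
  have hj'j : j' ≠ j := fun h => by rw [h] at hjj; omega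
  have h₀ : (X j' * (X j * 1) : MvPowerSeries (Fin n) ℂ) • pderiv ℂ j' ∈ g0 n := by
    refine smul_pderiv_mem_g0 ((mem_componentSpace_of_lt (by omega)).mpr ⟨0, X j * 1, zero_mem _,
      ?_, zero_mem _, Ideal.mul_mem_right _ _ (X_mem_mIdeal j), by rw [zero_add]⟩)
    rw [Ioi_eq_Ici_of_succ hjj, mul_one]
    exact hXj
  obtain ⟨_, hT, u, huS, hu0, rfl⟩ := exists_mem_derivedSeriesSet_of_lie hA
    (P := fun x => ∃ u ∈ supported ℂ (Set.Ioi j), u ≠ 0 ∧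
      x = (X j' * (X j * u)) • pderiv ℂ j')
    (fun _ ⟨u, huS, hu0, hx⟩ => ⟨f * u, Subalgebra.mul_mem _ hfS huS, mul_ne_zero hf0 hu0, by
      rw [hx, lie_smul_pderiv_of_pderiv_eq_zero hpA]
      congr 1
      simp only [Derivation.leibniz, pderiv_X_self, pderiv_X_of_ne hj'j,
        pderiv_eq_zero_of_notMem huS Set.self_notMem_Ioi, smul_eq_mul]
      ring⟩)
    h₀ ⟨1, Subalgebra.one_mem _, one_ne_zero, rfl⟩ (N + 1) le_rfl
  exact ⟨u, huS, hu0, hT⟩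

theorem exists_X_sq_mul_smul_pderiv_mem {f : MvPowerSeries (Fin n) ℂ}
    (hfS : f ∈ supported ℂ (Set.Ioi j)) (hf0 : f ≠ 0) {N : ℕ}
    (hA : (X j * f) • pderiv ℂ j ∈ (g0 n).derivedSeriesSet N) :
    ∃ q ∈ supported ℂ (Set.Ioi j), q ≠ 0 ∧
      (X j ^ 2 * q) • pderiv ℂ j' ∈ (g0 n).derivedSeriesSet (N + 1) := by
  have hXj : X j ∈ supported ℂ (Set.Ici j) := X_mem_supported Set.self_mem_Ici
  have hpA : pderiv ℂ j' (X j * f) = 0 := pderiv_eq_zero_of_mem_supported_Ici_of_succ hjj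
    (Subalgebra.mul_mem _ hXj (supported_mono Set.Ioi_subset_Ici_self hfS))
  have h₀ : (X j ^ 2 * 1 : MvPowerSeries (Fin n) ℂ) • pderiv ℂ j' ∈ g0 n := by
    refine smul_pderiv_mem_g0 ((mem_componentSpace_of_lt (by omega)).mpr ⟨X j ^ 2 * 1, 0,
      ?_, zero_mem _, by rw [mul_one]; exact Ideal.pow_mem_pow (X_mem_mIdeal j) 2, zero_mem _,
      by rw [mul_zero, add_zero]⟩)
    rw [Ioi_eq_Ici_of_succ hjj, mul_one]
    exact Subalgebra.pow_mem _ hXj 2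
  obtain ⟨_, hR, q, hqS, hq0, rfl⟩ := exists_mem_derivedSeriesSet_of_lie hA
    (P := fun x => ∃ q ∈ supported ℂ (Set.Ioi j), q ≠ 0 ∧ x = (X j ^ 2 * q) • pderiv ℂ j')
    (fun _ ⟨q, hqS, hq0, hx⟩ => ⟨(2 : ℂ) • (f * q),
      Subalgebra.smul_mem _ (Subalgebra.mul_mem _ hfS hqS) _,
      smul_ne_zero two_ne_zero (mul_ne_zero hf0 hq0), by
      rw [hx, lie_smul_pderiv_of_pderiv_eq_zero hpA]
      congr 1
      simp only [Derivation.leibniz, pderiv_pow, pderiv_X_self,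
        pderiv_eq_zero_of_notMem hqS Set.self_notMem_Ioi, smul_eq_mul, smul_eq_C_mul, map_ofNat,
        Nat.cast_ofNat]
      ring⟩)
    h₀ ⟨1, Subalgebra.one_mem _, one_ne_zero, rfl⟩ (N + 1) le_rfl
  exact ⟨q, hqS, hq0, hR⟩

theorem exists_smul_pderiv_mem_of_hasDerivedPair {r : ℕ} (h : HasDerivedPair j r) :
    ∃ f' ∈ supported ℂ (Set.Ici j), f' ≠ 0 ∧ ∃ p ∈ supported ℂ (Set.Ici j), p ≠ 0 ∧
      (X j' * f') • pderiv ℂ j' ∈ (g0 n).derivedSeriesSet (2 * r + 2) ∧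
      p • pderiv ℂ j' ∈ (g0 n).derivedSeriesSet (2 * r + 2) := by
  obtain ⟨f, g, hfS, hf0, hgS, hg0, hA, hB⟩ := h
  obtain ⟨u, huS, hu0, hT⟩ := exists_X_mul_X_mul_smul_pderiv_mem hjj hfS hf0 hA
  obtain ⟨q, hqS, hq0, hR⟩ := exists_X_sq_mul_smul_pderiv_mem hjj hfS hf0 hA
  have hj'j : j' ≠ j := fun h => by rw [h] at hjj; omega
  have hpg : pderiv ℂ j' g = 0 := pderiv_eq_zero_of_mem_supported_Ici_of_succ hjj hgS
  have hIci : supported ℂ (Set.Ioi j) ≤ supported ℂ (Set.Ici j) :=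
    supported_mono Set.Ioi_subset_Ici_self
  refine ⟨g * u, Subalgebra.mul_mem _ hgS (hIci huS), mul_ne_zero hg0 hu0,
    g * ((2 : ℂ) • (X j * q)), Subalgebra.mul_mem _ hgS (Subalgebra.smul_mem _
      (Subalgebra.mul_mem _ (X_mem_supported Set.self_mem_Ici) (hIci hqS)) _),
    mul_ne_zero hg0 (smul_ne_zero two_ne_zero (mul_ne_zero (X_ne_zero j) hq0)), ?_, ?_⟩
  · convert lie_mem_derivedSeriesSet hB hT using 1
    rw [lie_smul_pderiv_of_pderiv_eq_zero hpg]
    congr 1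
    simp only [Derivation.leibniz, pderiv_X_self, pderiv_X_of_ne hj'j,
      pderiv_eq_zero_of_notMem huS Set.self_notMem_Ioi, smul_eq_mul]
    ring
  · convert lie_mem_derivedSeriesSet hB hR using 1
    rw [lie_smul_pderiv_of_pderiv_eq_zero hpg]
    congr 1
    simp only [Derivation.leibniz, pderiv_pow, pderiv_X_self,
      pderiv_eq_zero_of_notMem hqS Set.self_notMem_Ioi, smul_eq_mul, smul_eq_C_mul, map_ofNat,
      Nat.cast_ofNat]
    ring

theorem HasDerivedPair.pred {r : ℕ} (h : HasDerivedPair j r) : HasDerivedPair j' (r + 1) := by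
  obtain ⟨f', hf'S, hf'0, p, hpS, hp0, hA', hP⟩ :=
    exists_smul_pderiv_mem_of_hasDerivedPair hjj h
  have hj'le : j' ≤ j := by rw [Fin.le_def]; omega
  refine ⟨f', p * f', by rwa [Ioi_eq_Ici_of_succ hjj], hf'0,
    supported_mono (Set.Ici_subset_Ici.mpr hj'le) (Subalgebra.mul_mem _ hpS hf'S),
    mul_ne_zero hp0 hf'0, hA', ?_⟩
  show _ ∈ (g0 n).derivedSeriesSet (2 * r + 2 + 1)
  convert lie_mem_derivedSeriesSet hP hA' using 1
  rw [lie_smul_pderiv, pderiv_eq_zero_of_mem_supported_Ici_of_succ hjj hpS, mul_zero, zero_smul,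
    sub_zero]
  congr 1
  simp only [Derivation.leibniz, pderiv_X_self,
    pderiv_eq_zero_of_mem_supported_Ici_of_succ hjj hf'S, smul_eq_mul]
  ring

end Step

theorem exists_hasDerivedPair {r : ℕ} (hr : r + 1 ≤ n) :
    ∃ j : Fin n, (j : ℕ) + r = n - 1 ∧ HasDerivedPair j r := by
  induction r with
  | zero => exact ⟨⟨n - 1, by omega⟩, rfl, hasDerivedPair_last rfl⟩
  | succ r ih =>
    obtain ⟨j, hj, h⟩ := ih (by omega)
    exact ⟨⟨j - 1, by omega⟩, by simp only; omega, h.pred (by simp only; omega)⟩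

theorem derivedSeries_g0_ne_bot (hn : 1 ≤ n) :
    LieAlgebra.derivedSeries ℂ (g0 n) (2 * n - 1) ≠ ⊥ := by
  obtain ⟨j, -, -, g, -, -, -, hg0, -, hB⟩ :=
    exists_hasDerivedPair (n := n) (r := n - 1) (by omega)
  rw [Ne, derivedSeries_eq_bot_iff, show 2 * n - 1 = 2 * (n - 1) + 1 by omega]
  exact fun h => smul_pderiv_ne_zero hg0 (h hB)

end FormalVectorField

/-- the set `G₀ = U₁ ⊕ V₁ ⊕ … ⊕ Uₙ ⊕ Vₙ` of formal vector fields `X`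
with `X(xⱼ) = aⱼ + xⱼ·bⱼ` (`aⱼ ∈ m² ∩ ℂ[[x_{j+1},…,xₙ]]`, `bⱼ ∈ m ∩ ℂ[[x_{j+1},…,xₙ]]`)
for `j < n` and `X(xₙ) = t·xₙ² + s·xₙ` is a Lie subalgebra of the formal vector fields
singular at `0`, whose `2n`-th derived algebra is zero while its `(2n-1)`-st derived
algebra is nonzero; in particular it has derived length exactly `2n`. -/
theorem exists_lieSubalgebra_derived_length_two_mul (n : ℕ) (hn : 1 ≤ n) :
    ∃ G₀ : LieSubalgebra ℂ
      (Derivation ℂ (MvPowerSeries (Fin n) ℂ) (MvPowerSeries (Fin n) ℂ)),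
      (∀ X, X ∈ G₀ ↔
        ((∀ j : Fin n, (j : ℕ) < n - 1 →
          ∃ a b : MvPowerSeries (Fin n) ℂ,
            OnlyVarsAfter n j a ∧ OnlyVarsAfter n j b ∧
            a ∈ (mIdeal n) ^ 2 ∧ b ∈ mIdeal n ∧
            X (MvPowerSeries.X j) = a + MvPowerSeries.X j * b) ∧
        (∀ j : Fin n, (j : ℕ) = n - 1 →
          ∃ t s : ℂ,
            X (MvPowerSeries.X j) = t • (MvPowerSeries.X j) ^ 2 +
              s • MvPowerSeries.X j))) ∧
      (∀ X ∈ G₀, ∀ f ∈ mIdeal n, X f ∈ mIdeal n) ∧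
      LieAlgebra.derivedSeries ℂ G₀ (2 * n) = ⊥ ∧
      LieAlgebra.derivedSeries ℂ G₀ (2 * n - 1) ≠ ⊥ :=
  ⟨FormalVectorField.g0 n, fun _ => FormalVectorField.mem_g0_iff,
    fun _ hX f _ => FormalVectorField.map_mem_mIdeal hX f,
    FormalVectorField.derivedSeries_g0_two_mul_eq_bot,
    FormalVectorField.derivedSeries_g0_ne_bot hn⟩
end

section
/- Fix n ≥ 4. Define monomials w₁,…,w_{n−1} in ℂ[x₁,…,xₙ] by w_{n−1} = xₙ and wⱼ = x_{j+1}²·w_{j+1}² for 1 ≤ j ≤ n−2. Define derivations of ℂ[[x₁,…,xₙ]] by X₁ = w₁·x₂²·∂/∂x₁, X₂ = w₂·(4x₁x₂·∂/∂x₁ + x₂²·∂/∂x₂), X₃ = w₃·(−4x₁x₃·∂/∂x₁ − 2x₂x₃·∂/∂x₂ + x₃²·∂/∂x₃), X_k = w_k·(−2x_{k−1}x_k·∂/∂x_{k−1} + x_k²·∂/∂x_k) for 4 ≤ k ≤ n−1, and Xₙ = −x_{n−1}xₙ·∂/∂x_{n−1} + xₙ²·∂/∂xₙ. Then the derivations X₁,…,Xₙ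 pairwise commute: [X_k, X_j] = 0 for all 1 ≤ j, k ≤ n. -/
/-!
A derivation of `ℂ[[x₁,…,xₙ]]` is determined by its values on the variables (it preserves each
ideal `(x_s ^ k)`, and what remains of a series modulo these ideals is a polynomial), so it
suffices to check `X_k (X_j x_i) = X_j (X_k x_i)` for all `i`. By the Leibniz rule this only
needs the values of the `X_k` on the `x_i` and on the monomials `w_m`. Apart from `w_{k-1}`,
`X_k` kills every `w_m`: for `m ≥ k` because `w_m` involves only `x_{m+1}, …, x_n`, and for
`m ≤ k - 2` because `X_k` kills `x_{k-1} w_{k-1}`, whose square is `w_{k-2}`.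
-/

namespace MvPowerSeries

variable {σ R : Type*} [CommRing R]

theorem derivation_map_coe_eq_zero {D : Derivation R (MvPowerSeries σ R) (MvPowerSeries σ R)}
    (hD : ∀ s, D (X s) = 0) (p : MvPolynomial σ R) : D p = 0 := by
  induction p using MvPolynomial.induction_on with
  | C a => rw [MvPolynomial.coe_C, c_eq_algebraMap, D.map_algebraMap]
  | add p q hp hq => rw [MvPolynomial.coe_add, map_add, hp, hq, add_zero]
  | mul_X p s hp =>
    rw [MvPolynomial.coe_mul, MvPolynomial.coe_X, D.leibniz, hD, hp, smul_zero, smul_zero,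
      add_zero]

theorem coeff_derivation_eq_zero {D : Derivation R (MvPowerSeries σ R) (MvPowerSeries σ R)}
    (hD : ∀ s, D (X s) = 0) (d : σ →₀ ℕ) (S : Finset σ) (f : MvPowerSeries σ R)
    (hf : ∀ m : σ →₀ ℕ, (∀ s ∈ S, m s ≤ d s) → coeff m f = 0) : coeff d (D f) = 0 := by
  classical
  induction S using Finset.induction_on generalizing f with
  | empty => rw [show f = 0 from ext fun m => hf m (by simp), map_zero, map_zero]
  | insert t S _ ih =>
    -- `f = g + X t ^ (d t + 1) * h`, where `g` keeps the terms of degree `≤ d t` in `X t`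
    set g : MvPowerSeries σ R := fun m => if m t ≤ d t then coeff m f else 0
    have hg (m : σ →₀ ℕ) : coeff m g = if m t ≤ d t then coeff m f else 0 := rfl
    obtain ⟨h, hh⟩ : X t ^ (d t + 1) ∣ f - g := X_pow_dvd_iff.2 fun m hm => by
      rw [map_sub, hg, if_pos (Nat.lt_succ_iff.1 hm), sub_self]
    have hDg : coeff d (D g) = 0 := ih g fun m hm => by
      rw [hg]
      split_ifs with ht
      · exact hf m (Finset.forall_mem_insert .. |>.2 ⟨ht, hm⟩)
      · rfl
    have hDh : coeff d (D (X t ^ (d t + 1) * h)) = 0 := by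
      rw [D.leibniz, D.leibniz_pow, hD, smul_zero, smul_zero, smul_zero, add_zero, smul_eq_mul]
      exact X_pow_dvd_iff.1 (dvd_mul_right _ _) d (Nat.lt_succ_self _)
    rw [← sub_add_cancel f g, hh, map_add, map_add, hDh, hDg, add_zero]

theorem derivation_eq_zero_of_forall_X [Finite σ]
    {D : Derivation R (MvPowerSeries σ R) (MvPowerSeries σ R)} (hD : ∀ s, D (X s) = 0) :
    D = 0 := by
  classical
  have := Fintype.ofFinite σ
  ext f d
  rw [Derivation.zero_apply, map_zero, ← sub_add_cancel f (trunc' R d f), map_add,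
    derivation_map_coe_eq_zero hD, add_zero]
  refine coeff_derivation_eq_zero hD d Finset.univ _ fun m hm => ?_
  rw [map_sub, MvPolynomial.coeff_coe, coeff_trunc',
    if_pos (Finsupp.le_def.2 fun s => hm s (Finset.mem_univ s)), sub_self]

theorem derivation_lie_eq_zero [Finite σ]
    {D₁ D₂ : Derivation R (MvPowerSeries σ R) (MvPowerSeries σ R)}
    (h : ∀ s, D₁ (D₂ (X s)) = D₂ (D₁ (X s))) : ⁅D₁, D₂⁆ = 0 :=
  derivation_eq_zero_of_forall_X fun s => by rw [Derivation.commutator_apply, h, sub_self]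

end MvPowerSeries

variable {R A : Type*} [CommSemiring R] [CommRing A] [Algebra R A]

namespace Derivation

theorem map_ofNat (D : Derivation R A A) (k : ℕ) [k.AtLeastTwo] : D (ofNat(k) : A) = 0 := by
  rw [← Nat.cast_ofNat]
  exact D.map_natCast k

theorem map_sq_mul_sq (D : Derivation R A A) (a b : A) :
    D (a ^ 2 * b ^ 2) = 2 * a * b * (b * D a + a * D b) := by
  simp only [leibniz, leibniz_pow, smul_eq_mul, nsmul_eq_mul]
  push_cast
  ring

end Derivation

structure IsMonomialTower (n : ℕ) (x w : ℕ → A) : Prop where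
  last : w (n - 1) = x n
  succ : ∀ j, 1 ≤ j → j ≤ n - 2 → w j = x (j + 1) ^ 2 * w (j + 1) ^ 2

namespace IsMonomialTower

variable {n : ℕ} {x w : ℕ → A}

theorem map_eq_zero_of_forall_gt (hw : IsMonomialTower n x w) {D : Derivation R A A} {m : ℕ}
    (hD : ∀ i, m < i → i ≤ n → D (x i) = 0) :
    ∀ l, m ≤ l → 1 ≤ l → l ≤ n - 1 → D (w l) = 0 := by
  suffices ∀ d l, n - 1 - l = d → m ≤ l → 1 ≤ l → l ≤ n - 1 → D (w l) = 0 from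
    fun l => this _ l rfl
  intro d
  induction d with
  | zero =>
    intro l hd hml hl hln
    rw [show l = n - 1 by omega, hw.last]
    exact hD n (by omega) le_rfl
  | succ d ih =>
    intro l hd hml hl hln
    rw [hw.succ l hl (by omega), D.map_sq_mul_sq, hD (l + 1) (by omega) (by omega),
      ih (l + 1) (by omega) (by omega) (by omega) (by omega)]
    ring

theorem map_eq_zero_of_map_mul (hw : IsMonomialTower n x w) {D : Derivation R A A} {m : ℕ}
    (hm : m ≤ n - 2) (hDm : D (x (m + 1) * w (m + 1)) = 0)
    (hD : ∀ i, 2 ≤ i → i ≤ m → D (x i) = 0) :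
    ∀ l, 1 ≤ l → l ≤ m → D (w l) = 0 := by
  suffices ∀ d l, m - l = d → 1 ≤ l → l ≤ m → D (w l) = 0 from
    fun l => this _ l rfl
  intro d
  induction d with
  | zero =>
    intro l hd hl hlm
    obtain rfl : l = m := by omega
    rw [hw.succ l hl hm, ← mul_pow, D.leibniz_pow, hDm, smul_zero, smul_zero]
  | succ d ih =>
    intro l hd hl hlm
    rw [hw.succ l hl (by omega), D.map_sq_mul_sq, hD (l + 1) (by omega) (by omega),
      ih (l + 1) (by omega) (by omega) (by omega)]
    ring

end IsMonomialTower

structure IsTowerDerivations (n : ℕ) (x w : ℕ → A) (X : ℕ → Derivation R A A) : Prop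
    extends IsMonomialTower n x w where
  one_one : X 1 (x 1) = w 1 * x 2 ^ 2
  one_of_two_le : ∀ i, 2 ≤ i → i ≤ n → X 1 (x i) = 0
  two_one : X 2 (x 1) = w 2 * (4 * x 1 * x 2)
  two_two : X 2 (x 2) = w 2 * x 2 ^ 2
  two_of_three_le : ∀ i, 3 ≤ i → i ≤ n → X 2 (x i) = 0
  three_one : X 3 (x 1) = w 3 * (-(4 * x 1 * x 3))
  three_two : X 3 (x 2) = w 3 * (-(2 * x 2 * x 3))
  three_three : X 3 (x 3) = w 3 * x 3 ^ 2
  three_of_four_le : ∀ i, 4 ≤ i → i ≤ n → X 3 (x i) = 0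
  mid_pred : ∀ k, 4 ≤ k → k ≤ n - 1 → X k (x (k - 1)) = w k * (-(2 * x (k - 1) * x k))
  mid_self : ∀ k, 4 ≤ k → k ≤ n - 1 → X k (x k) = w k * x k ^ 2
  mid_of_ne : ∀ k, 4 ≤ k → k ≤ n - 1 → ∀ i, 1 ≤ i → i ≤ n → i ≠ k - 1 → i ≠ k → X k (x i) = 0
  last_pred : X n (x (n - 1)) = -(x (n - 1) * x n)
  last_self : X n (x n) = x n ^ 2
  last_of_le : ∀ i, 1 ≤ i → i ≤ n - 2 → X n (x i) = 0

namespace IsTowerDerivations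

variable {n : ℕ} {x w : ℕ → A} {X : ℕ → Derivation R A A}

theorem map_x_pred (h : IsTowerDerivations n x w X) {k i : ℕ} (hk : 3 ≤ k) (hkn : k ≤ n - 1)
    (hi : i + 1 = k) : X k (x i) = w k * (-(2 * x i * x k)) := by
  obtain rfl | hk := eq_or_lt_of_le hk
  · obtain rfl : i = 2 := by omega
    exact h.three_two
  · obtain rfl : i = k - 1 := by omega
    exact h.mid_pred k hk hkn

theorem map_x_self (h : IsTowerDerivations n x w X) {k : ℕ} (hk : 2 ≤ k) (hkn : k ≤ n - 1) :
    X k (x k) = w k * x k ^ 2 := by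
  obtain rfl | rfl | hk : k = 2 ∨ k = 3 ∨ 4 ≤ k := by omega
  exacts [h.two_two, h.three_three, h.mid_self k hk hkn]

theorem map_x_of_lt (h : IsTowerDerivations n x w X) {k i : ℕ} (hk : 1 ≤ k) (hkn : k ≤ n - 1)
    (hki : k < i) (hin : i ≤ n) : X k (x i) = 0 := by
  obtain rfl | rfl | rfl | hk : k = 1 ∨ k = 2 ∨ k = 3 ∨ 4 ≤ k := by omega
  exacts [h.one_of_two_le i hki hin, h.two_of_three_le i hki hin, h.three_of_four_le i hki hin,
    h.mid_of_ne k hk hkn i (by omega) hin (by omega) (by omega)]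

theorem map_x_last_pred (h : IsTowerDerivations n x w X) {i : ℕ} (hi : i + 1 = n) :
    X n (x i) = -(x i * x n) := by
  obtain rfl : i = n - 1 := by omega
  exact h.last_pred

theorem map_w_of_le (h : IsTowerDerivations n x w X) {k l : ℕ} (hk : 1 ≤ k) (hkn : k ≤ n - 1)
    (hkl : k ≤ l) (hl : l ≤ n - 1) : X k (w l) = 0 :=
  h.map_eq_zero_of_forall_gt (fun i hi hin => h.map_x_of_lt hk hkn hi hin) l hkl (by omega) hl

theorem map_w_pred (h : IsTowerDerivations n x w X) {k l : ℕ} (hk : 2 ≤ k) (hkn : k ≤ n - 1)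
    (hl : l + 1 = k) : X k (w l) = 2 * w k * x k * w l := by
  subst hl
  rw [h.succ l (by omega) (by omega), Derivation.map_sq_mul_sq, h.map_x_self hk hkn,
    h.map_w_of_le (by omega) hkn le_rfl hkn]
  ring

theorem map_w_of_ne (h : IsTowerDerivations n x w X) {k l : ℕ} (hk : 1 ≤ k) (hkn : k ≤ n - 1)
    (hl : 1 ≤ l) (hln : l ≤ n - 1) (hlk : l + 1 ≠ k) : X k (w l) = 0 := by
  obtain hkl | hlk : k ≤ l ∨ l + 2 ≤ k := by omega
  · exact h.map_w_of_le hk hkn hkl hln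
  refine h.map_eq_zero_of_map_mul (m := k - 2) (by omega) ?_
    (fun i hi hik => h.mid_of_ne k (by omega) hkn i (by omega) (by omega) (by omega) (by omega))
    l hl (by omega)
  rw [show k - 2 + 1 = k - 1 by omega, Derivation.leibniz,
    h.map_x_pred (by omega) hkn (by omega), h.map_w_pred (by omega) hkn (by omega)]
  simp only [smul_eq_mul]
  ring

theorem map_w_last_pred (h : IsTowerDerivations n x w X) {l : ℕ} (hl : l + 1 = n) :
    X n (w l) = x n * w l := by
  obtain rfl : l = n - 1 := by omega
  rw [h.last, h.last_self, sq]

theorem map_w_last_of_le (h : IsTowerDerivations n x w X) {l : ℕ} (hn : 3 ≤ n) (hl : 1 ≤ l)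
    (hln : l ≤ n - 2) : X n (w l) = 0 := by
  refine h.map_eq_zero_of_map_mul (m := n - 2) le_rfl ?_
    (fun i hi hin => h.last_of_le i (by omega) hin) l hl hln
  rw [show n - 2 + 1 = n - 1 by omega, h.last, Derivation.leibniz, h.last_pred, h.last_self]
  simp only [smul_eq_mul]
  ring

theorem map_map_x_comm (h : IsTowerDerivations n x w X) (hn : 4 ≤ n) {j k i : ℕ} (hj : 1 ≤ j)
    (hjk : j < k) (hkn : k ≤ n) (hi : 1 ≤ i) (hin : i ≤ n) :
    X k (X j (x i)) = X j (X k (x i)) := by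
  -- split until every index is a literal or a canonical expression in `j`, `k`, `n`,
  -- so that `omega` decides the side conditions of all the rewrite rules
  have hi' : i = 1 ∨ i = 2 ∨ i = 3 ∨ i = j - 1 ∨ i = j ∨ i = k - 1 ∨ i = k ∨
      (i ≠ 1 ∧ i ≠ 2 ∧ i ≠ 3 ∧ i ≠ j - 1 ∧ i ≠ j ∧ i ≠ k - 1 ∧ i ≠ k) := by omega
  have hj' : j = 1 ∨ j = 2 ∨ j = 3 ∨ j = 4 ∨ 5 ≤ j := by omega
  have hk' : k = 2 ∨ k = 3 ∨ k = 4 ∨ 5 ≤ k := by omega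
  have hn' : k = n ∨ k < n := by omega
  have hadj : k = j + 1 ∨ j + 1 < k := by omega
  rcases hj' with hj' | hj' | hj' | hj' | hj' <;>
  rcases hk' with hk' | hk' | hk' | hk' <;>
  rcases hn' with hn' | hn' <;>
  rcases hadj with hadj | hadj <;>
  (try omega) <;>
  rcases hi' with hi' | hi' | hi' | hi' | hi' | hi' | hi' | hi' <;>
  first
  | omega
  | subst_vars
    simp (disch := omega) only [Derivation.leibniz, pow_two, smul_eq_mul, Nat.add_sub_cancel,
      map_neg, Derivation.map_ofNat, map_zero, h.one_one, h.one_of_two_le, h.two_one,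
      h.two_of_three_le, h.three_one, h.three_of_four_le, h.map_x_pred, h.map_x_self,
      h.mid_of_ne, h.map_x_last_pred, h.last_self, h.last_of_le, h.map_w_pred, h.map_w_of_ne,
      h.map_w_last_pred, h.map_w_last_of_le] <;>
    ring

end IsTowerDerivations

/-- with `wⱼ` the monomials `w_{n-1} = xₙ`, `wⱼ = x_{j+1}²·w_{j+1}²`, the
derivations `X₁ = w₁x₂²∂/∂x₁`, `X₂ = w₂(4x₁x₂∂/∂x₁ + x₂²∂/∂x₂)`,
`X₃ = w₃(−4x₁x₃∂/∂x₁ − 2x₂x₃∂/∂x₂ + x₃²∂/∂x₃)`,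
`X_k = w_k(−2x_{k−1}x_k∂/∂x_{k−1} + x_k²∂/∂x_k)` for `4 ≤ k ≤ n−1` and
`Xₙ = −x_{n−1}xₙ∂/∂x_{n−1} + xₙ²∂/∂xₙ` of `ℂ[[x₁,…,xₙ]]` pairwise commute.
(A derivation is specified by its values on the variables; we use 1-based indexing,
`x j = MvPowerSeries.X ⟨j-1⟩`.) -/
theorem derivations_pairwise_commute (n : ℕ) (hn : 4 ≤ n)
    (x : ℕ → MvPowerSeries (Fin n) ℂ)
    (hx : ∀ j : ℕ, ∀ _ : 1 ≤ j, ∀ _ : j ≤ n,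
      x j = MvPowerSeries.X (⟨j - 1, by omega⟩ : Fin n))
    (w : ℕ → MvPowerSeries (Fin n) ℂ)
    (hwlast : w (n - 1) = x n)
    (hwrec : ∀ j : ℕ, 1 ≤ j → j ≤ n - 2 → w j = x (j + 1) ^ 2 * w (j + 1) ^ 2)
    (XX : ℕ → Derivation ℂ (MvPowerSeries (Fin n) ℂ) (MvPowerSeries (Fin n) ℂ))
    (hX1a : XX 1 (x 1) = w 1 * x 2 ^ 2)
    (hX1b : ∀ i : ℕ, 2 ≤ i → i ≤ n → XX 1 (x i) = 0)
    (hX2a : XX 2 (x 1) = w 2 * (4 * x 1 * x 2))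
    (hX2b : XX 2 (x 2) = w 2 * x 2 ^ 2)
    (hX2c : ∀ i : ℕ, 3 ≤ i → i ≤ n → XX 2 (x i) = 0)
    (hX3a : XX 3 (x 1) = w 3 * (-(4 * x 1 * x 3)))
    (hX3b : XX 3 (x 2) = w 3 * (-(2 * x 2 * x 3)))
    (hX3c : XX 3 (x 3) = w 3 * x 3 ^ 2)
    (hX3d : ∀ i : ℕ, 4 ≤ i → i ≤ n → XX 3 (x i) = 0)
    (hXka : ∀ k : ℕ, 4 ≤ k → k ≤ n - 1 →
      XX k (x (k - 1)) = w k * (-(2 * x (k - 1) * x k)))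
    (hXkb : ∀ k : ℕ, 4 ≤ k → k ≤ n - 1 → XX k (x k) = w k * x k ^ 2)
    (hXkc : ∀ k : ℕ, 4 ≤ k → k ≤ n - 1 → ∀ i : ℕ, 1 ≤ i → i ≤ n →
      i ≠ k - 1 → i ≠ k → XX k (x i) = 0)
    (hXna : XX n (x (n - 1)) = -(x (n - 1) * x n))
    (hXnb : XX n (x n) = x n ^ 2)
    (hXnc : ∀ i : ℕ, 1 ≤ i → i ≤ n - 2 → XX n (x i) = 0) :
    ∀ j k : ℕ, 1 ≤ j → j ≤ n → 1 ≤ k → k ≤ n → ⁅XX k, XX j⁆ = 0 := by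
  have h : IsTowerDerivations n x w XX := ⟨⟨hwlast, hwrec⟩, hX1a, hX1b, hX2a, hX2b, hX2c, hX3a,
    hX3b, hX3c, hX3d, hXka, hXkb, hXkc, hXna, hXnb, hXnc⟩
  have hlt : ∀ j k, 1 ≤ j → j < k → k ≤ n → ⁅XX k, XX j⁆ = 0 := fun j k hj hjk hkn =>
    MvPowerSeries.derivation_lie_eq_zero fun ⟨s, hs⟩ => by
      have hxs := hx (s + 1) (by omega) (by omega)
      simp only [Nat.add_sub_cancel] at hxs
      rw [← hxs]
      exact h.map_map_x_comm hn hj hjk hkn (by omega) (by omega)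
  intro j k hj hjn hk hkn
  rcases lt_trichotomy j k with hjk | rfl | hkj
  · exact hlt j k hj hjk hkn
  · exact lie_self _
  · rw [← lie_skew, hlt k j hk hkj hjn, neg_zero]
end
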